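/- On C_3, if a configuration (c_1,c_2,c_3) with c_1+c_2+c_3 = c is debt-reachable from some configuration C but not reachable from C, then (c_1,c_2,c_3) is a permutation of (c,0,0). -/
import Mathlib


/-- A legal chip-firing move on the graph `G`: vertex `i` may fire only if it carries at
least its degree in chips; firing sends `C` to `C - L e_i`. -/
def LegalStep {n : ℕ} (G : SimpleGraph (Fin n)) [DecidableRel G.Adj]
    (C D : Fin n → ℤ) : Prop :=
  ∃ i : Fin n, (G.degree i : ℤ) ≤ C i ∧
    D = C - (G.lapMatrix ℤ).mulVec (Pi.single i 1)

lemma lap3 (x : Fin 3 → ℤ) :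
    ((SimpleGraph.cycleGraph 3).lapMatrix ℤ).mulVec x
      = ![2*x 0 - x 1 - x 2, 2*x 1 - x 0 - x 2, 2*x 2 - x 0 - x 1] := by
  funext i
  fin_cases i <;>
    simp [Matrix.mulVec, dotProduct, Fin.sum_univ_three, SimpleGraph.lapMatrix,
      Matrix.sub_apply, SimpleGraph.degMatrix, SimpleGraph.adjMatrix,
      show (SimpleGraph.cycleGraph 3).Adj 0 1 by decide,
      show (SimpleGraph.cycleGraph 3).Adj 0 2 by decide,
      show (SimpleGraph.cycleGraph 3).Adj 1 2 by decide,
      show (SimpleGraph.cycleGraph 3).Adj 1 0 by decide,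
      show (SimpleGraph.cycleGraph 3).Adj 2 0 by decide,
      show (SimpleGraph.cycleGraph 3).Adj 2 1 by decide,
      show ∀ i, (SimpleGraph.cycleGraph 3).degree i = 2 by decide] <;> ring

lemma ne0 (P : Fin 3 → Prop) (h : ∃ j, j ≠ (0:Fin 3) ∧ P j) : P 1 ∨ P 2 := by
  obtain ⟨j, hj, hP⟩ := h; fin_cases j
  · exact absurd rfl hj
  · exact Or.inl hP
  · exact Or.inr hP

lemma ne1 (P : Fin 3 → Prop) (h : ∃ j, j ≠ (1:Fin 3) ∧ P j) : P 0 ∨ P 2 := by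
  obtain ⟨j, hj, hP⟩ := h; fin_cases j
  · exact Or.inl hP
  · exact absurd rfl hj
  · exact Or.inr hP

lemma ne2 (P : Fin 3 → Prop) (h : ∃ j, j ≠ (2:Fin 3) ∧ P j) : P 0 ∨ P 1 := by
  obtain ⟨j, hj, hP⟩ := h; fin_cases j
  · exact Or.inl hP
  · exact Or.inr hP
  · exact absurd rfl hj

lemma fin3_scalar (y : Fin 3 → ℤ) (h : ∃ k, y k = 0) : y 0 = 0 ∨ y 1 = 0 ∨ y 2 = 0 := by
  obtain ⟨k, hk⟩ := h; fin_cases k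
  · exact Or.inl hk
  · exact Or.inr (Or.inl hk)
  · exact Or.inr (Or.inr hk)

lemma single3 (i j : Fin 3) : (Pi.single i 1 : Fin 3 → ℤ) j = if j = i then 1 else 0 :=
  Pi.single_apply ..

lemma lapSingle3 (i : Fin 3) :
    ((SimpleGraph.cycleGraph 3).lapMatrix ℤ).mulVec (Pi.single i 1)
      = fun j => if j = i then 2 else -1 := by
  rw [lap3]; funext j
  fin_cases i <;> fin_cases j <;> simp [single3]

lemma singleSum (i : Fin 3) :
    (Pi.single i 1 : Fin 3 → ℤ) 0 + (Pi.single i 1 : Fin 3 → ℤ) 1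
      + (Pi.single i 1 : Fin 3 → ℤ) 2 = 1 := by
  fin_cases i <;> simp [single3]

lemma reach_aux (C' : Fin 3 → ℤ) (hC' : ∀ i, 0 ≤ C' i)
    (hnc : ∀ i, ∃ j, j ≠ i ∧ C' j ≠ 0) :
    ∀ (n : ℕ) (C y : Fin 3 → ℤ),
      (y 0 + y 1 + y 2).toNat ≤ n →
      (∀ i, 0 ≤ C i) → (∀ i, 0 ≤ y i) → (∃ k, y k = 0) →
      C - ((SimpleGraph.cycleGraph 3).lapMatrix ℤ).mulVec y = C' →
      Relation.ReflTransGen (LegalStep (SimpleGraph.cycleGraph 3)) C C' := by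
  intro n
  induction n with
  | zero =>
    intro C y hsum hCpos hypos _ heq
    have h0 : y 0 = 0 ∧ y 1 = 0 ∧ y 2 = 0 := by
      have := hypos 0; have := hypos 1; have := hypos 2; omega
    have hCC : C = C' := by
      rw [← heq, lap3]; funext i; fin_cases i <;> simp <;> omega
    rw [hCC]
  | succ n ih =>
    intro C y hsum hCpos hypos hk heq
    by_cases h0 : y 0 = 0 ∧ y 1 = 0 ∧ y 2 = 0
    · have hCC : C = C' := by
        rw [← heq, lap3]; funext i; fin_cases i <;> simp <;> omega
      rw [hCC]
    · have e0 : C' 0 = C 0 - (2 * y 0 - y 1 - y 2) := by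
        rw [← heq, lap3]; simp
      have e1 : C' 1 = C 1 - (2 * y 1 - y 0 - y 2) := by
        rw [← heq, lap3]; simp
      have e2 : C' 2 = C 2 - (2 * y 2 - y 0 - y 1) := by
        rw [← heq, lap3]; simp
      have hfire : ∃ i, 0 < y i ∧ 2 ≤ C i := by
        by_contra hstuck
        push_neg at hstuck
        have s0 := hstuck 0; have s1 := hstuck 1; have s2 := hstuck 2
        have n0 := ne0 _ (hnc 0); have n1 := ne1 _ (hnc 1); have n2 := ne2 _ (hnc 2)
        have hks := fin3_scalar y hk
        have p0 := hC' 0; have p1 := hC' 1; have p2 := hC' 2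
        have c0 := hCpos 0; have c1 := hCpos 1; have c2 := hCpos 2
        have q0 := hypos 0; have q1 := hypos 1; have q2 := hypos 2
        omega
      obtain ⟨i, hyi, hCi⟩ := hfire
      obtain ⟨k, hk⟩ := hk
      have hki : k ≠ i := by rintro rfl; omega
      have hstep : LegalStep (SimpleGraph.cycleGraph 3) C
          (C - ((SimpleGraph.cycleGraph 3).lapMatrix ℤ).mulVec (Pi.single i 1)) := by
        refine ⟨i, ?_, rfl⟩
        have hd : ∀ m : Fin 3, (SimpleGraph.cycleGraph 3).degree m = 2 := by decide
        rw [hd i]; exact_mod_cast hCi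
      refine Relation.ReflTransGen.head hstep
        (ih _ (y - Pi.single i 1) ?_ ?_ ?_ ⟨k, ?_⟩ ?_)
      · have he0 := singleSum i
        simp only [Pi.sub_apply]
        omega
      · intro j
        simp only [Pi.sub_apply, lapSingle3]
        by_cases hji : j = i
        · subst hji; simp only [if_pos rfl]; omega
        · simp only [if_neg hji]
          have := hCpos j
          omega
      · intro j
        rw [Pi.sub_apply, single3]
        have := hypos j
        by_cases hji : j = i
        · subst hji; simp only [if_pos rfl]; omega
        · simp only [if_neg hji]; omega
      · rw [Pi.sub_apply, single3, if_neg hki, hk]; ring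
      · rw [← heq, Matrix.mulVec_sub]
        abel

/-- On the triangle `C_3`, if a configuration `C'` is debt-reachable from a
configuration `C` but not reachable from `C`, then `C'` is a permutation of
`(c,0,0)` where `c` is the total number of chips. -/
theorem debtReachable_not_reachable_C3 (C C' : Fin 3 → ℤ)
    (hC : ∀ i, 0 ≤ C i) (hC' : ∀ i, 0 ≤ C' i)
    (hdebt : ∃ x : Fin 3 → ℤ,
      ((SimpleGraph.cycleGraph 3).lapMatrix ℤ).mulVec x = C' - C)
    (hnotreach : ¬ Relation.ReflTransGen (LegalStep (SimpleGraph.cycleGraph 3)) C C') :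
    ∃ i : Fin 3, (∀ j, j ≠ i → C' j = 0) ∧ C' i = ∑ j, C j := by
  obtain ⟨x, hx⟩ := hdebt
  rw [lap3] at hx
  have d0 : 2 * x 0 - x 1 - x 2 = C' 0 - C 0 := by
    have := congrFun hx 0; simpa using this
  have d1 : 2 * x 1 - x 0 - x 2 = C' 1 - C 1 := by
    have := congrFun hx 1; simpa using this
  have d2 : 2 * x 2 - x 0 - x 1 = C' 2 - C 2 := by
    have := congrFun hx 2; simpa using this
  have hsum : C' 0 + C' 1 + C' 2 = C 0 + C 1 + C 2 := by omega
  by_contra hcon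
  push_neg at hcon
  have hnc : ∀ i, ∃ j, j ≠ i ∧ C' j ≠ 0 := by
    intro i
    by_contra h
    push_neg at h
    refine hcon i h ?_
    rw [Fin.sum_univ_three]
    fin_cases i
    · show C' 0 = C 0 + C 1 + C 2
      have h1 := h 1 (by decide); have h2 := h 2 (by decide); omega
    · show C' 1 = C 0 + C 1 + C 2
      have h1 := h 0 (by decide); have h2 := h 2 (by decide); omega
    · show C' 2 = C 0 + C 1 + C 2
      have h1 := h 0 (by decide); have h2 := h 1 (by decide); omega
  apply hnotreach
  set M : ℤ := max (max (x 0) (x 1)) (x 2) with hM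
  have hM0 : x 0 ≤ M := (le_max_left _ _).trans (le_max_left _ _)
  have hM1 : x 1 ≤ M := (le_max_right _ _).trans (le_max_left _ _)
  have hM2 : x 2 ≤ M := le_max_right _ _
  have hMch : M = x 0 ∨ M = x 1 ∨ M = x 2 := by
    rcases max_choice (max (x 0) (x 1)) (x 2) with h | h
    · rcases max_choice (x 0) (x 1) with h' | h'
      · left; rw [hM, h, h']
      · right; left; rw [hM, h, h']
    · right; right; rw [hM, h]
  set y : Fin 3 → ℤ := fun i => M - x i with hy
  refine reach_aux C' hC' hnc ((y 0 + y 1 + y 2).toNat) C y le_rfl hC ?_ ?_ ?_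
  · intro i; fin_cases i <;> simp [hy] <;> omega
  · rcases hMch with h | h | h
    · exact ⟨0, by simp [hy, h]⟩
    · exact ⟨1, by simp [hy, h]⟩
    · exact ⟨2, by simp [hy, h]⟩
  · rw [lap3]
    funext i
    fin_cases i
    · show C 0 - (2*y 0 - y 1 - y 2) = C' 0
      simp only [hy]; omega
    · show C 1 - (2*y 1 - y 0 - y 2) = C' 1
      simp only [hy]; omega
    · show C 2 - (2*y 2 - y 0 - y 1) = C' 2
      simp only [hy]; omega
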